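/- (Stationarity of the Markovian solution) In the setting of the Markovian discounted BSDE, suppose additionally that X is time-homogeneous, i.e. A_t = A for all t, and that the Markovian driver f(ω,t,z) = f̃(X_t(ω),z) does not depend on t. Then the deterministic function v : ℕ × S → ℝ with Y_t = v(t,X_t) and e_kᵀZ_t = v(t+1,e_k) can be taken independent of t: there is v : S → ℝ with Y_t = v(X_t) and e_kᵀZ_t = v(e_k) for all t. -/

import Mathlib

open MeasureTheory Finset Filter

noncomputable section

namespace DiscreteEBSDE

variable {Ω : Type*} {mΩ : MeasurableSpace Ω} {N : ℕ}

/-- The standard basis vector `e i` of `ℝ^N`. -/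
def e (N : ℕ) (i : Fin N) : Fin N → ℝ := Pi.single i 1

/-- The Euclidean inner product on `ℝ^N`. -/
def dotR {N : ℕ} (z w : Fin N → ℝ) : ℝ := ∑ i, z i * w i

/-- The process `X` takes values in the standard basis of `ℝ^N`. -/
def BasisValued (X : ℕ → Ω → (Fin N → ℝ)) : Prop := ∀ t ω, ∃ i, X t ω = e N i

/-- The σ-algebra generated by `X 0, …, X t`. -/
def natSigma (X : ℕ → Ω → (Fin N → ℝ)) (t : ℕ) : MeasurableSpace Ω :=
  ⨆ s ∈ Set.Iic t, MeasurableSpace.comap (X s) inferInstance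

/-- `F` is the `P`-completion of the natural filtration of `X`:
a set is `F t`-measurable iff it agrees with a set of the natural σ-algebra up to a
`P`-null symmetric difference. -/
def IsCompletedNaturalFiltration (P : Measure Ω) (X : ℕ → Ω → (Fin N → ℝ))
    (F : Filtration ℕ mΩ) : Prop :=
  ∀ (t : ℕ) (A : Set Ω), MeasurableSet[F t] A ↔
    ∃ B : Set Ω, MeasurableSet[natSigma X t] B ∧ P (symmDiff A B) = 0

/-- The martingale difference `M (t+1) = X (t+1) - E[X (t+1) | F t]` (componentwise). -/
def Mdiff (P : Measure Ω) (F : Filtration ℕ mΩ) (X : ℕ → Ω → (Fin N → ℝ)) (t : ℕ)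
    (ω : Ω) : Fin N → ℝ :=
  fun i => X (t + 1) ω i - (P[(fun ω' => X (t + 1) ω' i)|F t]) ω

/-- The conditional second moment `‖Z‖²_{M_{t+1}} = E[(Zᵀ M_{t+1})² | F t]`. -/
def seminormSq (P : Measure Ω) (F : Filtration ℕ mΩ) (X : ℕ → Ω → (Fin N → ℝ))
    (t : ℕ) (Z : Ω → Fin N → ℝ) : Ω → ℝ :=
  P[(fun ω => (dotR (Z ω) (Mdiff P F X t ω)) ^ 2)|F t]

/-- The stochastic seminorm `‖Z‖_{M_{t+1}}`. -/
def mSeminorm (P : Measure Ω) (F : Filtration ℕ mΩ) (X : ℕ → Ω → (Fin N → ℝ))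
    (t : ℕ) (Z : Ω → Fin N → ℝ) (ω : Ω) : ℝ :=
  Real.sqrt (seminormSq P F X t Z ω)

/-- `Z ∼_{M_{t+1}} Z'`, i.e. `‖Z - Z'‖_{M_{t+1}} = 0` a.s. -/
def equivMt (P : Measure Ω) (F : Filtration ℕ mΩ) (X : ℕ → Ω → (Fin N → ℝ)) (t : ℕ)
    (Z Z' : Ω → Fin N → ℝ) : Prop :=
  seminormSq P F X t (fun ω => Z ω - Z' ω) =ᵐ[P] 0

/-- `Z ∼_M Z'`. -/
def equivM (P : Measure Ω) (F : Filtration ℕ mΩ) (X : ℕ → Ω → (Fin N → ℝ))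
    (Z Z' : ℕ → Ω → Fin N → ℝ) : Prop :=
  ∀ t, equivMt P F X t (Z t) (Z' t)

/-- A driver `f(ω,t,y,z)` is adapted if `(ω,y,z) ↦ f(ω,t,y,z)` is
`F t ⊗ B(ℝ) ⊗ B(ℝ^N)`-measurable for every `t`. -/
def DriverAdapted (F : Filtration ℕ mΩ) (f : Ω → ℕ → ℝ → (Fin N → ℝ) → ℝ) : Prop :=
  ∀ t : ℕ, Measurable[(F t).prod inferInstance]
    fun p : Ω × (ℝ × (Fin N → ℝ)) => f p.1 t p.2.1 p.2.2

/-- A column-stochastic transition matrix. -/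
def IsTransMat {n : ℕ} (A : Matrix (Fin n) (Fin n) ℝ) : Prop :=
  (∀ i j, 0 ≤ A i j) ∧ ∀ j, ∑ i, A i j = 1

/-- `X` is a Markov chain with transition matrices `A t`; since `X` is valued in the
standard basis this is equivalent to `E[X (t+1) | F t] = (A t) (X t)` a.s. -/
def IsMarkovChain (P : Measure Ω) (F : Filtration ℕ mΩ) (X : ℕ → Ω → (Fin N → ℝ))
    (A : ℕ → Matrix (Fin N) (Fin N) ℝ) : Prop :=
  (∀ t, IsTransMat (A t)) ∧
    ∀ (t : ℕ) (i : Fin N),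
      (P[(fun ω => X (t + 1) ω i)|F t]) =ᵐ[P] fun ω => (A t).mulVec (X t ω) i

/-- The atom of `F t` containing `ω₀` (the set of paths agreeing with `ω₀` up to time `t`). -/
def pathAtom (X : ℕ → Ω → (Fin N → ℝ)) (t : ℕ) (ω₀ : Ω) : Set Ω :=
  {ω' | ∀ s ≤ t, X s ω' = X s ω₀}

/-- `min_{i ∈ J_t^F} (z - z')ᵀ(e_i - E[X_{t+1} | F_t])` where `F` is the atom of `ω₀`
 at time `t` and `J_t^F = {i : P(X_{t+1} = e_i | F) > 0}`. -/
def minJump (P : Measure Ω) (F : Filtration ℕ mΩ) (X : ℕ → Ω → (Fin N → ℝ))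
    (t : ℕ) (ω₀ : Ω) (z z' : Fin N → ℝ) (ω : Ω) : ℝ :=
  sInf {r : ℝ | ∃ i : Fin N,
    0 < P ({ω' | X (t + 1) ω' = e N i} ∩ pathAtom X t ω₀) ∧
    r = dotR (z - z') (fun j => e N i j - (P[(fun ω'' => X (t + 1) ω'' j)|F t]) ω)}

/-- The comparison condition of the change-of-measure proposition: on every atom `F` of
`F t`, `f(ω,t,y,z) - f(ω,t,y,z') > min_{i ∈ J_t^F}{(z-z')ᵀ(e_i - E[X_{t+1}|F_t])}`, unless
this minimum is `0`, in which case equality holds. -/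
def ComparisonCondition (P : Measure Ω) (F : Filtration ℕ mΩ) (X : ℕ → Ω → (Fin N → ℝ))
    (f : Ω → ℕ → ℝ → (Fin N → ℝ) → ℝ) : Prop :=
  ∀ (t : ℕ) (y : ℝ) (z z' : Fin N → ℝ) (ω₀ : Ω), 0 < P (pathAtom X t ω₀) →
    ∀ᵐ ω ∂P, ω ∈ pathAtom X t ω₀ →
      (minJump P F X t ω₀ z z' ω = 0 → f ω t y z - f ω t y z' = 0) ∧
      (minJump P F X t ω₀ z z' ω ≠ 0 →
        minJump P F X t ω₀ z z' ω < f ω t y z - f ω t y z')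

/-- `f` is Lipschitz in `z` with constant `L`, w.r.t. the stochastic seminorm. -/
def DriverLipschitzNoY (P : Measure Ω) (F : Filtration ℕ mΩ) (X : ℕ → Ω → (Fin N → ℝ))
    (L : ℝ) (f : Ω → ℕ → (Fin N → ℝ) → ℝ) : Prop :=
  ∀ (t : ℕ) (Zt Z't : Ω → Fin N → ℝ),
    StronglyMeasurable[F t] Zt → StronglyMeasurable[F t] Z't →
    ∀ᵐ ω ∂P, |f ω t (Zt ω) - f ω t (Z't ω)| ≤
      L * mSeminorm P F X t (fun ω' => Zt ω' - Z't ω') ω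

/-- `(Y,Z)` is an adapted solution of the finite horizon BSDE with driver `f`,
horizon `T` and terminal condition `ξ`. -/
def SolvesFiniteBSDE (P : Measure Ω) (F : Filtration ℕ mΩ) (X : ℕ → Ω → (Fin N → ℝ))
    (f : Ω → ℕ → ℝ → (Fin N → ℝ) → ℝ) (T : ℕ) (ξ : Ω → ℝ)
    (Y : ℕ → Ω → ℝ) (Z : ℕ → Ω → Fin N → ℝ) : Prop :=
  Adapted F Y ∧ Adapted F Z ∧
    ∀ t ≤ T, ∀ᵐ ω ∂P,
      Y t ω - ∑ u ∈ Finset.Ico t T, f ω u (Y u ω) (Z u ω) +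
        ∑ u ∈ Finset.Ico t T, dotR (Z u ω) (Mdiff P F X u ω) = ξ ω

/-- `(Y,Z)` is an adapted solution of the infinite-horizon discounted BSDE
with discount rate `α` and driver `f` (independent of `y`). -/
def SolvesDiscountedBSDE (P : Measure Ω) (F : Filtration ℕ mΩ) (X : ℕ → Ω → (Fin N → ℝ))
    (α : ℝ) (f : Ω → ℕ → (Fin N → ℝ) → ℝ)
    (Y : ℕ → Ω → ℝ) (Z : ℕ → Ω → Fin N → ℝ) : Prop :=
  Adapted F Y ∧ Adapted F Z ∧
    ∀ t T : ℕ, t < T → ∀ᵐ ω ∂P,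
      Y T ω = Y t ω - ∑ u ∈ Finset.Ico t T, (f ω u (Z u ω) - α * Y u ω) +
        ∑ u ∈ Finset.Ico t T, dotR (Z u ω) (Mdiff P F X u ω)

/-- `(Y,Z,lam)` solves the Ergodic BSDE with Markovian driver `f`. -/
def SolvesEBSDE (P : Measure Ω) (F : Filtration ℕ mΩ) (X : ℕ → Ω → (Fin N → ℝ))
    (f : (Fin N → ℝ) → (Fin N → ℝ) → ℝ) (Y : ℕ → Ω → ℝ) (Z : ℕ → Ω → Fin N → ℝ)
    (lam : ℝ) : Prop :=
  ∀ t T : ℕ, t < T → ∀ᵐ ω ∂P,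
    Y T ω = Y t ω - ∑ u ∈ Finset.Ico t T, (f (X u ω) (Z u ω) - lam) +
      ∑ u ∈ Finset.Ico t T, dotR (Z u ω) (Mdiff P F X u ω)

/-- Ratio with the convention `0/0 := 1`. -/
def balRatio (a b : ℝ) : ℝ := if a = 0 ∧ b = 0 then 1 else a / b

/-- The driver `f(ω,t,y,z)` is `γ`-balanced. -/
def IsGammaBalanced (P : Measure Ω) (F : Filtration ℕ mΩ) (X : ℕ → Ω → (Fin N → ℝ))
    (A : ℕ → Matrix (Fin N) (Fin N) ℝ) (γ : ℝ)
    (f : Ω → ℕ → ℝ → (Fin N → ℝ) → ℝ) : Prop :=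
  ∃ ψ : Ω → ℕ → (Fin N → ℝ) → (Fin N → ℝ) → (Fin N → ℝ),
    (∀ t : ℕ, Measurable[(F t).prod inferInstance]
      fun p : Ω × ((Fin N → ℝ) × (Fin N → ℝ)) => ψ p.1 t p.2.1 p.2.2) ∧
    ∀ (t : ℕ) (y : ℝ) (z z' : Fin N → ℝ), ∀ᵐ ω ∂P,
      f ω t y z - f ω t y z' =
          dotR (z - z') (fun i => ψ ω t z z' i - (A t).mulVec (X t ω) i) ∧
        (∀ i, balRatio (ψ ω t z z' i) ((A t).mulVec (X t ω) i) ∈ Set.Icc γ γ⁻¹) ∧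
        ∑ i, ψ ω t z z' i = 1

/-- The driver `f(ω,t,z)` (independent of `y`) is `γ`-balanced. -/
def IsGammaBalancedNoY (P : Measure Ω) (F : Filtration ℕ mΩ) (X : ℕ → Ω → (Fin N → ℝ))
    (A : ℕ → Matrix (Fin N) (Fin N) ℝ) (γ : ℝ)
    (f : Ω → ℕ → (Fin N → ℝ) → ℝ) : Prop :=
  ∃ ψ : Ω → ℕ → (Fin N → ℝ) → (Fin N → ℝ) → (Fin N → ℝ),
    (∀ t : ℕ, Measurable[(F t).prod inferInstance]
      fun p : Ω × ((Fin N → ℝ) × (Fin N → ℝ)) => ψ p.1 t p.2.1 p.2.2) ∧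
    ∀ (t : ℕ) (z z' : Fin N → ℝ), ∀ᵐ ω ∂P,
      f ω t z - f ω t z' =
          dotR (z - z') (fun i => ψ ω t z z' i - (A t).mulVec (X t ω) i) ∧
        (∀ i, balRatio (ψ ω t z z' i) ((A t).mulVec (X t ω) i) ∈ Set.Icc γ γ⁻¹) ∧
        ∑ i, ψ ω t z z' i = 1

/-- A probability vector on `Fin n`. -/
def IsProbVec {n : ℕ} (μ : Fin n → ℝ) : Prop := (∀ i, 0 ≤ μ i) ∧ ∑ i, μ i = 1

/-- Total variation distance between (signed) measures on a finite state space. -/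
def tvDist {n : ℕ} (μ ν : Fin n → ℝ) : ℝ := (∑ x, |μ x - ν x|) / 2

/-- Uniform ergodicity of the chain induced by the column-stochastic matrix `A`. -/
def UniformlyErgodic {n : ℕ} (A : Matrix (Fin n) (Fin n) ℝ) : Prop :=
  ∃ π : Fin n → ℝ, IsProbVec π ∧ ∃ R ρ : ℝ, 0 < R ∧ 0 < ρ ∧
    ∀ (t : ℕ) (μ : Fin n → ℝ), IsProbVec μ →
      tvDist ((A ^ t).mulVec μ) π ≤ R * Real.exp (-ρ * t)

/-!
Let `v` solve the Bellman equation `(1 + α) v j = ftil (e j) v + ∑ k, A k j * v k` at every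
state reached with positive probability. It exists because the comparison condition squeezes
`ftil (e j) z - ftil (e j) z'` between two jumps `(z - z')ᵀ(e i - A e j)` with `0 < A i j`,
which makes the right-hand side a `(1 + α)⁻¹`-contraction for the sup distance.

On an atom of `F t`, both `Y t - v(X t)` and `Z t` are constant, and the same squeeze yields
a next state, reached with positive probability, at which `|Y (t+1) - v(X (t+1))|` is at least
`(1 + α) |Y t - v(X t)|`. As `Y` is bounded, iterating forces `Y t = v(X t)`. The BSDE step
then reads `(Z t - v)ᵀ M_{t+1} = ftil (X t) (Z t) - ftil (X t) v`; the right-hand side is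
known at time `t` while the left-hand side averages to `0` over the next state, so both
vanish.
-/

section Bellman

variable (A : Matrix (Fin N) (Fin N) ℝ)

/-- The value of `dᵀ M_{t+1}` on `{X t = e j, X (t+1) = e i}`. -/
def jump (j i : Fin N) (d : Fin N → ℝ) : ℝ := d i - ∑ k, A k j * d k

lemma jump_sub (j i : Fin N) (d d' : Fin N → ℝ) :
    jump A j i (d - d') = jump A j i d - jump A j i d' := by
  simp only [jump, Pi.sub_apply, mul_sub, sum_sub_distrib]
  ring

/-- What the comparison condition says at state `j` once `E[X_{t+1} | F_t] = A e_j`, so that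
`J_t^F = {i | 0 < A i j}`; only the inequality `min ≤ f z - f z'` is kept. -/
def JumpDominated (j : Fin N) (g : (Fin N → ℝ) → ℝ) : Prop :=
  ∀ z z', ∃ i, 0 < A i j ∧ jump A j i (z - z') ≤ g z - g z'

namespace JumpDominated

variable {A} {j : Fin N} {g : (Fin N → ℝ) → ℝ}

lemma exists_sub_le_jump (h : JumpDominated A j g) (z z' : Fin N → ℝ) :
    ∃ i, 0 < A i j ∧ g z - g z' ≤ jump A j i (z - z') := by
  obtain ⟨i, hi, hle⟩ := h z' z
  have hswap : jump A j i (z' - z) = -jump A j i (z - z') := by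
    rw [jump_sub, jump_sub]
    ring
  exact ⟨i, hi, by linarith⟩

lemma abs_sub_add_sum_le (h : JumpDominated A j g) (u w : Fin N → ℝ) :
    |(g u + ∑ k, A k j * u k) - (g w + ∑ k, A k j * w k)| ≤ dist u w := by
  obtain ⟨i₁, -, h₁⟩ := h u w
  obtain ⟨i₂, -, h₂⟩ := h.exists_sub_le_jump u w
  have hu₁ := abs_le.mp ((Real.dist_eq _ _).symm.trans_le (dist_le_pi_dist u w i₁))
  have hu₂ := abs_le.mp ((Real.dist_eq _ _).symm.trans_le (dist_le_pi_dist u w i₂))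
  simp only [jump, Pi.sub_apply, mul_sub, sum_sub_distrib] at h₁ h₂
  rw [abs_le]
  constructor <;> linarith

lemma exists_abs_le_abs_add (h : JumpDominated A j g) (a : ℝ) (z v : Fin N → ℝ) :
    ∃ i, 0 < A i j ∧ |a| ≤ |a + (jump A j i (z - v) - (g z - g v))| := by
  rcases le_or_gt 0 a with ha | ha
  · obtain ⟨i, hi, hle⟩ := h.exists_sub_le_jump z v
    refine ⟨i, hi, ?_⟩
    rw [abs_of_nonneg ha]
    exact (le_add_of_nonneg_right (sub_nonneg.mpr hle)).trans (le_abs_self _)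
  · obtain ⟨i, hi, hle⟩ := h z v
    refine ⟨i, hi, ?_⟩
    rw [abs_of_neg ha]
    exact (by linarith : -a ≤ -(a + (jump A j i (z - v) - (g z - g v)))).trans (neg_le_abs _)

end JumpDominated

theorem exists_bellman_solution {α : ℝ} (hα : 0 < α) (S : Set (Fin N))
    (g : Fin N → (Fin N → ℝ) → ℝ) (hg : ∀ j ∈ S, JumpDominated A j (g j)) :
    ∃ v : Fin N → ℝ, ∀ j ∈ S, (1 + α) * v j = g j v + ∑ k, A k j * v k := by
  classical
  have hα₁ : 0 < 1 + α := by linarith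
  let Φ : (Fin N → ℝ) → Fin N → ℝ := fun v j =>
    if j ∈ S then (g j v + ∑ k, A k j * v k) / (1 + α) else 0
  let K : NNReal := ⟨(1 + α)⁻¹, (inv_pos.2 hα₁).le⟩
  have hΦ : ContractingWith K Φ := by
    refine ⟨NNReal.coe_lt_coe.mp (inv_lt_one_of_one_lt₀ (by linarith)),
      LipschitzWith.of_dist_le_mul fun u w =>
        (dist_pi_le_iff (mul_nonneg K.2 dist_nonneg)).2 fun j => ?_⟩
    change dist (Φ u j) (Φ w j) ≤ (1 + α)⁻¹ * dist u w
    by_cases hj : j ∈ S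
    · simp only [Φ, if_pos hj, Real.dist_eq, ← sub_div, abs_div, abs_of_pos hα₁, inv_mul_eq_div]
      exact div_le_div_of_nonneg_right ((hg j hj).abs_sub_add_sum_le u w) hα₁.le
    · simp only [Φ, if_neg hj, dist_self]
      exact mul_nonneg K.2 dist_nonneg
  refine ⟨ContractingWith.fixedPoint Φ hΦ, fun j hj => ?_⟩
  have hfix := congrFun hΦ.fixedPoint_isFixedPt j
  simp only [Φ, if_pos hj] at hfix
  rw [← hfix, mul_div_cancel₀ _ hα₁.ne']

/-- Averaging the jumps of `d` over the column `A · j` gives `0`. -/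
lemma eq_zero_of_forall_jump_eq {j : Fin N} (hnonneg : ∀ i, 0 ≤ A i j)
    (hsum : ∑ i, A i j = 1) {d : Fin N → ℝ} {r : ℝ} (h : ∀ i, 0 < A i j → jump A j i d = r) :
    r = 0 := by
  have hmean : ∑ i, A i j * jump A j i d = ∑ i, A i j * r := sum_congr rfl fun i _ => by
    rcases (hnonneg i).eq_or_lt with h0 | hpos
    · rw [← h0, zero_mul, zero_mul]
    · rw [h i hpos]
  simp only [jump, mul_sub, sum_sub_distrib, ← sum_mul, hsum] at hmean
  linarith

lemma sub_eq_of_bellman {α y y' : ℝ} {g : (Fin N → ℝ) → ℝ} {j i : Fin N} {v z : Fin N → ℝ}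
    (hy : y' = (1 + α) * y - g z + jump A j i z)
    (hv : (1 + α) * v j = g v + ∑ k, A k j * v k) :
    y' - v i = (1 + α) * (y - v j) + (jump A j i (z - v) - (g z - g v)) := by
  rw [jump_sub, hy]
  simp only [jump]
  linarith

end Bellman

lemma eq_zero_of_forall_pow_mul_abs_le {r x D : ℝ} (hr : 1 < r) (h : ∀ k : ℕ, r ^ k * |x| ≤ D) :
    x = 0 := by
  by_contra hx
  have hpos : 0 < |x| := abs_pos.mpr hx
  obtain ⟨k, hk⟩ := pow_unbounded_of_one_lt (D / |x|) hr
  rw [div_lt_iff₀ hpos] at hk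
  linarith [h k]

lemma dotR_e (v : Fin N → ℝ) (i : Fin N) : dotR v (e N i) = v i := by
  simp [dotR, e, Pi.single_apply]

lemma dotR_e_sub_mulVec_e (A : Matrix (Fin N) (Fin N) ℝ) (d : Fin N → ℝ) (i j : Fin N) :
    dotR d (e N i - A.mulVec (e N j)) = jump A j i d := by
  simp [dotR, jump, e, Matrix.mulVec_single, mul_sub, sum_sub_distrib, Pi.single_apply, mul_comm]

lemma BasisValued.apply_eq_indicator {X : ℕ → Ω → Fin N → ℝ} (hX : BasisValued X) (t : ℕ)
    (i : Fin N) : (fun ω => X t ω i) = {ω | X t ω = e N i}.indicator 1 := by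
  funext ω
  obtain ⟨k, hk⟩ := hX t ω
  by_cases hki : k = i
  · simp [hk, hki, e]
  · have hne : e N k ≠ e N i := fun h => by simpa [e, Pi.single_apply, hki] using congrFun h k
    rw [Set.indicator_of_notMem (s := {ω | X t ω = e N i}) (fun h => hne (hk.symm.trans h)), hk]
    simp [e, hki]

section Atoms

variable (X : ℕ → Ω → Fin N → ℝ)

lemma natSigma_le_comap_path (t : ℕ) :
    natSigma X t ≤ MeasurableSpace.comap (fun ω (s : Fin (t + 1)) => X s ω) inferInstance :=
  iSup₂_le fun s hs =>
    (show Measurable[MeasurableSpace.comap (fun ω (u : Fin (t + 1)) => X u ω) inferInstance]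
      (X s) from (measurable_pi_apply (⟨s, Nat.lt_succ_of_le hs⟩ : Fin (t + 1))).comp
        (comap_measurable fun ω (u : Fin (t + 1)) => X u ω)).comap_le

lemma measurable_natSigma {s t : ℕ} (hs : s ≤ t) : Measurable[natSigma X t] (X s) :=
  Measurable.of_comap_le (le_iSup₂ (f := fun (u : ℕ) (_ : u ∈ Set.Iic t) =>
    MeasurableSpace.comap (X u) inferInstance) s hs)

lemma measurableSet_pathAtom (t : ℕ) (ω₀ : Ω) :
    MeasurableSet[natSigma X t] (pathAtom X t ω₀) := by
  have : pathAtom X t ω₀ = ⋂ s ∈ Set.Iic t, X s ⁻¹' {X s ω₀} := by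
    ext; simp [pathAtom]
  rw [this]
  exact .biInter (Set.to_countable _) fun s hs =>
    measurable_natSigma X hs (measurableSet_singleton _)

lemma pathAtom_subset_of_mem {t : ℕ} {B : Set Ω} (hB : MeasurableSet[natSigma X t] B)
    {ω₀ : Ω} (h : ω₀ ∈ B) : pathAtom X t ω₀ ⊆ B := by
  obtain ⟨S, -, rfl⟩ := natSigma_le_comap_path X t B hB
  intro ω hω
  have : (fun s : Fin (t + 1) => X s ω) = fun s : Fin (t + 1) => X s ω₀ :=
    funext fun s => hω s (Nat.lt_succ_iff.mp s.isLt)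
  simpa [Set.mem_preimage, this] using h

lemma pathAtom_eq_of_mem {t : ℕ} {ω₀ ω₁ : Ω} (h : ω₁ ∈ pathAtom X t ω₀) :
    pathAtom X t ω₁ = pathAtom X t ω₀ :=
  Set.ext fun _ => ⟨fun h' s hs => (h' s hs).trans (h s hs),
    fun h' s hs => (h' s hs).trans (h s hs).symm⟩

variable {X} {P : Measure Ω} {F : Filtration ℕ mΩ}

lemma IsCompletedNaturalFiltration.natSigma_le (hF : IsCompletedNaturalFiltration P X F)
    (t : ℕ) : natSigma X t ≤ F t :=
  fun B hB => (hF t B).mpr ⟨B, hB, by simp⟩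

lemma IsCompletedNaturalFiltration.measurableSet_pathAtom
    (hF : IsCompletedNaturalFiltration P X F) (t : ℕ) (ω₀ : Ω) :
    MeasurableSet (pathAtom X t ω₀) :=
  F.le t _ (hF.natSigma_le t _ (DiscreteEBSDE.measurableSet_pathAtom X t ω₀))

lemma IsCompletedNaturalFiltration.measurable (hF : IsCompletedNaturalFiltration P X F)
    (t : ℕ) : Measurable[F t] (X t) :=
  (measurable_natSigma X le_rfl).mono (hF.natSigma_le t) le_rfl

lemma IsCompletedNaturalFiltration.ae_restrict_pathAtom_mem_or_notMem
    (hF : IsCompletedNaturalFiltration P X F) {t : ℕ} {B : Set Ω}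
    (hB : MeasurableSet[F t] B) (ω₀ : Ω) :
    (∀ᵐ ω ∂P.restrict (pathAtom X t ω₀), ω ∈ B) ∨
      ∀ᵐ ω ∂P.restrict (pathAtom X t ω₀), ω ∉ B := by
  obtain ⟨C, hC, hBC⟩ := (hF t B).mp hB
  have hBC' : ∀ᵐ ω ∂P.restrict (pathAtom X t ω₀), ω ∈ B ↔ ω ∈ C :=
    ae_restrict_of_ae ((measure_symmDiff_eq_zero_iff.mp hBC).mono fun _ h => Iff.of_eq h)
  have hmem := ae_restrict_mem (μ := P) (hF.measurableSet_pathAtom t ω₀)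
  by_cases hne : (pathAtom X t ω₀ ∩ C).Nonempty
  · obtain ⟨ω₁, hω₁, hω₁C⟩ := hne
    have hsub : pathAtom X t ω₀ ⊆ C :=
      pathAtom_eq_of_mem X hω₁ ▸ pathAtom_subset_of_mem X hC hω₁C
    exact .inl (by filter_upwards [hBC', hmem] with ω h hω using h.mpr (hsub hω))
  · exact .inr (by filter_upwards [hBC', hmem] with ω h hω hωB using hne ⟨ω, hω, h.mp hωB⟩)

lemma IsCompletedNaturalFiltration.exists_ae_restrict_pathAtom_eq_const {β : Type*}
    [MeasurableSpace β] [Nonempty β] [HasCountableSeparatingOn β MeasurableSet Set.univ]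
    (hF : IsCompletedNaturalFiltration P X F) {t : ℕ} {g : Ω → β} (hg : Measurable[F t] g)
    (ω₀ : Ω) : ∃ c, ∀ᵐ ω ∂P.restrict (pathAtom X t ω₀), g ω = c :=
  exists_eventuallyEq_const_of_forall_separating MeasurableSet fun _ hU =>
    hF.ae_restrict_pathAtom_mem_or_notMem (hg hU) ω₀

lemma ae_of_forall_ae_restrict_pathAtom (hX : BasisValued X) (t : ℕ) {p : Ω → Prop}
    (h : ∀ ω₀, 0 < P (pathAtom X t ω₀) → ∀ᵐ ω ∂P.restrict (pathAtom X t ω₀), p ω) :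
    ∀ᵐ ω ∂P, p ω := by
  let atom (w : Fin (t + 1) → Fin N) : Set Ω := {ω | ∀ s : Fin (t + 1), X s ω = e N (w s)}
  have hcover : ⋃ w, atom w = Set.univ := Set.eq_univ_of_forall fun ω =>
    Set.mem_iUnion.mpr ⟨fun s => (hX s ω).choose, fun s => (hX s ω).choose_spec⟩
  rw [← Measure.restrict_univ (μ := P), ← hcover, ae_restrict_iUnion_iff]
  intro w
  rcases (atom w).eq_empty_or_nonempty with hw | ⟨ω₀, hω₀⟩
  · simp [hw]
  have hatom : atom w = pathAtom X t ω₀ := Set.ext fun ω =>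
    ⟨fun h s hs => (h ⟨s, Nat.lt_succ_of_le hs⟩).trans (hω₀ ⟨s, Nat.lt_succ_of_le hs⟩).symm,
      fun h s => (h s (Nat.lt_succ_iff.mp s.isLt)).trans (hω₀ s)⟩
  rw [hatom]
  rcases eq_or_ne (P (pathAtom X t ω₀)) 0 with h0 | hpos
  · simp [Measure.restrict_eq_zero.mpr h0]
  · exact h ω₀ (pos_iff_ne_zero.mpr hpos)

end Atoms

section MarkovChain

variable {X : ℕ → Ω → Fin N → ℝ} {P : Measure Ω} {F : Filtration ℕ mΩ}
  {A : ℕ → Matrix (Fin N) (Fin N) ℝ}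

lemma IsMarkovChain.ae_Mdiff_eq (hA : IsMarkovChain P F X A) (t : ℕ) :
    ∀ᵐ ω ∂P, Mdiff P F X t ω = X (t + 1) ω - (A t).mulVec (X t ω) := by
  filter_upwards [ae_all_iff.mpr (hA.2 t)] with ω hω
  funext i
  simp only [Mdiff, Pi.sub_apply, hω i]

variable [IsFiniteMeasure P] {t : ℕ} {ω₀ : Ω} {j : Fin N}

lemma IsMarkovChain.measureReal_inter_pathAtom (hX : BasisValued X)
    (hF : IsCompletedNaturalFiltration P X F) (hA : IsMarkovChain P F X A)
    (hj : X t ω₀ = e N j) (i : Fin N) :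
    P.real ({ω | X (t + 1) ω = e N i} ∩ pathAtom X t ω₀) =
      A t i j * P.real (pathAtom X t ω₀) := by
  have hatom := hF.natSigma_le t _ (measurableSet_pathAtom X t ω₀)
  have hS : MeasurableSet {ω | X (t + 1) ω = e N i} :=
    (hF.measurable (t + 1)).mono (F.le _) le_rfl (measurableSet_singleton _)
  have hint : Integrable (fun ω => X (t + 1) ω i) P := by
    rw [hX.apply_eq_indicator]
    exact (integrable_const 1).indicator hS
  calc P.real ({ω | X (t + 1) ω = e N i} ∩ pathAtom X t ω₀)
      = ∫ ω in pathAtom X t ω₀, X (t + 1) ω i ∂P := by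
        rw [hX.apply_eq_indicator, integral_indicator_one hS, measureReal_restrict_apply hS]
    _ = ∫ ω in pathAtom X t ω₀, (P[fun ω => X (t + 1) ω i | F t]) ω ∂P :=
        (setIntegral_condExp (F.le t) hint hatom).symm
    _ = ∫ _ in pathAtom X t ω₀, A t i j ∂P := by
        refine setIntegral_congr_ae (F.le t _ hatom) ?_
        filter_upwards [hA.2 t i] with ω hω hmem
        rw [hω, (hmem t le_rfl).trans hj]
        simp [e, Matrix.mulVec_single]
    _ = A t i j * P.real (pathAtom X t ω₀) := by rw [setIntegral_const, smul_eq_mul, mul_comm]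

lemma IsMarkovChain.measure_inter_pathAtom_eq_zero (hX : BasisValued X)
    (hF : IsCompletedNaturalFiltration P X F) (hA : IsMarkovChain P F X A)
    (hj : X t ω₀ = e N j) {i : Fin N} (hij : A t i j = 0) :
    P ({ω | X (t + 1) ω = e N i} ∩ pathAtom X t ω₀) = 0 := by
  rw [← measureReal_eq_zero_iff, hA.measureReal_inter_pathAtom hX hF hj i, hij, zero_mul]

lemma IsMarkovChain.measure_inter_pathAtom_ne_zero (hX : BasisValued X)
    (hF : IsCompletedNaturalFiltration P X F) (hA : IsMarkovChain P F X A)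
    (hpos : P (pathAtom X t ω₀) ≠ 0) (hj : X t ω₀ = e N j) {i : Fin N} (hij : A t i j ≠ 0) :
    P ({ω | X (t + 1) ω = e N i} ∩ pathAtom X t ω₀) ≠ 0 := by
  rw [Ne, ← measureReal_eq_zero_iff, hA.measureReal_inter_pathAtom hX hF hj i]
  exact mul_ne_zero hij (by rwa [Ne, measureReal_eq_zero_iff])

lemma IsMarkovChain.exists_mem_pathAtom_of_ae_restrict (hX : BasisValued X)
    (hF : IsCompletedNaturalFiltration P X F) (hA : IsMarkovChain P F X A)
    (hpos : P (pathAtom X t ω₀) ≠ 0) (hj : X t ω₀ = e N j) {i : Fin N} (hij : A t i j ≠ 0)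
    {p : Ω → Prop} (hp : ∀ᵐ ω ∂P.restrict (pathAtom X t ω₀), p ω) :
    ∃ ω ∈ pathAtom X t ω₀, X (t + 1) ω = e N i ∧ p ω := by
  obtain ⟨ω, ⟨hωi, hω⟩, hpω⟩ := Measure.exists_mem_of_measure_ne_zero_of_ae
    (hA.measure_inter_pathAtom_ne_zero hX hF hpos hj hij)
    (ae_restrict_of_ae_restrict_of_subset Set.inter_subset_right hp)
  exact ⟨ω, hω, hωi, hpω⟩

lemma IsMarkovChain.ae_restrict_pathAtom_ne_zero (hX : BasisValued X)
    (hF : IsCompletedNaturalFiltration P X F) (hA : IsMarkovChain P F X A)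
    (hj : X t ω₀ = e N j) :
    ∀ᵐ ω ∂P.restrict (pathAtom X t ω₀), ∀ i, X (t + 1) ω = e N i → A t i j ≠ 0 := by
  refine ae_all_iff.mpr fun i => ?_
  by_cases hij : A t i j = 0
  · filter_upwards [ae_restrict_of_ae (measure_eq_zero_iff_ae_notMem.mp
      (hA.measure_inter_pathAtom_eq_zero hX hF hj hij)),
      ae_restrict_mem (hF.measurableSet_pathAtom t ω₀)] with ω hω hmem hi
    exact absurd ⟨hi, hmem⟩ hω
  · exact .of_forall fun _ _ => hij

end MarkovChain

/-- The comparison condition constrains `ftil (e N j)` only at these states. -/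
def reachableStates (P : Measure Ω) (X : ℕ → Ω → Fin N → ℝ) : Set (Fin N) :=
  {j | ∃ t ω₀, X t ω₀ = e N j ∧ 0 < P (pathAtom X t ω₀)}

section BSDE

variable {X : ℕ → Ω → Fin N → ℝ} {P : Measure Ω} {F : Filtration ℕ mΩ}
  {A : Matrix (Fin N) (Fin N) ℝ} {α : ℝ} {ftil : (Fin N → ℝ) → (Fin N → ℝ) → ℝ}
  {Y : ℕ → Ω → ℝ} {Z : ℕ → Ω → Fin N → ℝ} {v : Fin N → ℝ}

lemma SolvesDiscountedBSDE.ae_succ {f : Ω → ℕ → (Fin N → ℝ) → ℝ}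
    (h : SolvesDiscountedBSDE P F X α f Y Z) (t : ℕ) :
    ∀ᵐ ω ∂P, Y (t + 1) ω =
      (1 + α) * Y t ω - f ω t (Z t ω) + dotR (Z t ω) (Mdiff P F X t ω) := by
  filter_upwards [h.2.2 t (t + 1) t.lt_succ_self] with ω hω
  rw [hω, Nat.Ico_succ_singleton, sum_singleton, sum_singleton]
  ring

lemma ae_restrict_pathAtom_deviation_succ (hF : IsCompletedNaturalFiltration P X F)
    (hA : IsMarkovChain P F X fun _ => A)
    (hYZ : SolvesDiscountedBSDE P F X α (fun ω t z => ftil (X t ω) z) Y Z) {t : ℕ} {ω₀ : Ω}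
    {j : Fin N} (hj : X t ω₀ = e N j) (hv : (1 + α) * v j = ftil (e N j) v + ∑ k, A k j * v k) :
    ∀ᵐ ω ∂P.restrict (pathAtom X t ω₀), ∀ i, X (t + 1) ω = e N i →
      Y (t + 1) ω - v i = (1 + α) * (Y t ω - v j) +
        (jump A j i (Z t ω - v) - (ftil (e N j) (Z t ω) - ftil (e N j) v)) := by
  filter_upwards [ae_restrict_of_ae (hYZ.ae_succ t), ae_restrict_of_ae (hA.ae_Mdiff_eq t),
    ae_restrict_mem (hF.measurableSet_pathAtom t ω₀)] with ω hY hM hω i hi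
  have hXt : X t ω = e N j := (hω t le_rfl).trans hj
  refine sub_eq_of_bellman A ?_ hv
  rw [hY, hM, hXt, hi, dotR_e_sub_mulVec_e]

lemma equivMt_of_ae_dotR_Mdiff_eq_zero {t : ℕ} {W W' : Ω → Fin N → ℝ}
    (h : ∀ᵐ ω ∂P, dotR (W ω - W' ω) (Mdiff P F X t ω) = 0) : equivMt P F X t W W' := by
  refine (condExp_congr_ae (h.mono fun ω hω => ?_)).trans (by rw [condExp_zero])
  simp [hω]

variable [IsFiniteMeasure P]

lemma jumpDominated_of_comparisonCondition (hX : BasisValued X)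
    (hF : IsCompletedNaturalFiltration P X F) (hA : IsMarkovChain P F X fun _ => A)
    (hfComp : ComparisonCondition P F X fun ω t _ z => ftil (X t ω) z) {t : ℕ} {ω₀ : Ω}
    {j : Fin N} (hpos : 0 < P (pathAtom X t ω₀)) (hj : X t ω₀ = e N j) :
    JumpDominated A j (ftil (e N j)) := by
  intro z z'
  let T := (fun i => jump A j i (z - z')) '' {i | 0 < A i j}
  have hT : T.Nonempty := by
    by_contra hT
    have hcol : ∑ i, A i j ≤ 0 := sum_nonpos fun i _ => not_lt.mp fun hi =>
      hT ⟨_, Set.mem_image_of_mem _ (show i ∈ {i | 0 < A i j} from hi)⟩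
    linarith [(hA.1 0).2 j]
  have hsupport : ∀ i, 0 < P ({ω | X (t + 1) ω = e N i} ∩ pathAtom X t ω₀) ↔ 0 < A i j :=
    fun i => by
      rw [pos_iff_ne_zero, ((hA.1 0).1 i j).lt_iff_ne']
      exact ⟨fun h hij => h (hA.measure_inter_pathAtom_eq_zero hX hF hj hij),
        hA.measure_inter_pathAtom_ne_zero hX hF hpos.ne' hj⟩
  obtain ⟨ω, hω, hcomp, hcond⟩ := Measure.exists_mem_of_measure_ne_zero_of_ae hpos.ne'
    (ae_restrict_of_ae ((hfComp t 0 z z' ω₀ hpos).and (ae_all_iff.mpr (hA.2 t))))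
  have hXt : X t ω = e N j := (hω t le_rfl).trans hj
  have hjump : ∀ i, dotR (z - z') (fun k => e N i k - (P[fun ω' => X (t + 1) ω' k | F t]) ω) =
      jump A j i (z - z') := fun i => by
    rw [← dotR_e_sub_mulVec_e]
    congr 1
    funext k
    simp only [hcond k, hXt, Pi.sub_apply]
  have hmin : minJump P F X t ω₀ z z' ω = sInf T := by
    simp only [minJump, hjump, hsupport]
    congr 1
    ext r
    simp [T, eq_comm]
  have hle : sInf T ≤ ftil (e N j) z - ftil (e N j) z' := by
    obtain ⟨h0, hne⟩ := hcomp hω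
    simp only [hXt, hmin] at h0 hne
    rcases eq_or_ne (sInf T) 0 with h | h
    · rw [h, h0 h]
    · exact (hne h).le
  obtain ⟨i, hi, hiT⟩ := hT.csInf_mem (Set.toFinite T)
  exact ⟨i, hi, hiT.le.trans hle⟩

variable (hX : BasisValued X) (hF : IsCompletedNaturalFiltration P X F)
  (hA : IsMarkovChain P F X fun _ => A)
  (hYZ : SolvesDiscountedBSDE P F X α (fun ω t z => ftil (X t ω) z) Y Z)
  (hv : ∀ j ∈ reachableStates P X, (1 + α) * v j = ftil (e N j) v + ∑ k, A k j * v k)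
include hX hF hA hYZ hv

lemma ae_mul_abs_deviation_le_of_succ (hα : 0 < α)
    (hfComp : ComparisonCondition P F X fun ω t _ z => ftil (X t ω) z) {t : ℕ} {b : ℝ}
    (hb : ∀ᵐ ω ∂P, |Y (t + 1) ω - dotR v (X (t + 1) ω)| ≤ b) :
    ∀ᵐ ω ∂P, (1 + α) * |Y t ω - dotR v (X t ω)| ≤ b := by
  refine ae_of_forall_ae_restrict_pathAtom hX t fun ω₀ hpos => ?_
  obtain ⟨j, hj⟩ := hX t ω₀
  obtain ⟨y, hy⟩ := hF.exists_ae_restrict_pathAtom_eq_const (hYZ.1 t) ω₀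
  obtain ⟨z, hz⟩ := hF.exists_ae_restrict_pathAtom_eq_const (hYZ.2.1 t) ω₀
  obtain ⟨i, hi, hgrow⟩ := (jumpDominated_of_comparisonCondition hX hF hA hfComp hpos hj
    ).exists_abs_le_abs_add ((1 + α) * (y - v j)) z v
  obtain ⟨ω, -, hXi, hdev, hyω, hzω, hbω⟩ :=
    hA.exists_mem_pathAtom_of_ae_restrict hX hF hpos.ne' hj hi.ne'
      ((ae_restrict_pathAtom_deviation_succ hF hA hYZ hj (hv j ⟨t, ω₀, hj, hpos⟩)).and
        (hy.and (hz.and (ae_restrict_of_ae hb))))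
  have hy_le : (1 + α) * |y - v j| ≤ b := calc
    (1 + α) * |y - v j| = |(1 + α) * (y - v j)| := by
      rw [abs_mul, abs_of_pos (by linarith : (0 : ℝ) < 1 + α)]
    _ ≤ _ := hgrow
    _ = |Y (t + 1) ω - dotR v (X (t + 1) ω)| := by rw [hXi, dotR_e, hdev i hXi, hyω, hzω]
    _ ≤ b := hbω
  filter_upwards [hy, ae_restrict_mem (hF.measurableSet_pathAtom t ω₀)] with ω' hyω' hω'
  rwa [hyω', (hω' t le_rfl).trans hj, dotR_e]

lemma ae_eq_dotR_of_bellman (hα : 0 < α)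
    (hfComp : ComparisonCondition P F X fun ω t _ z => ftil (X t ω) z)
    (hYbdd : ∃ D : ℝ, ∀ t : ℕ, ∀ᵐ ω ∂P, |Y t ω| ≤ D) (t : ℕ) :
    Y t =ᵐ[P] fun ω => dotR v (X t ω) := by
  obtain ⟨D, hD⟩ := hYbdd
  have hbound : ∀ k s, ∀ᵐ ω ∂P,
      (1 + α) ^ k * |Y s ω - dotR v (X s ω)| ≤ D + ∑ i, |v i| := by
    intro k
    induction k with
    | zero =>
      intro s
      filter_upwards [hD s] with ω hω
      obtain ⟨i, hi⟩ := hX s ω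
      rw [pow_zero, one_mul, hi, dotR_e]
      exact (abs_sub _ _).trans
        (add_le_add hω (single_le_sum (fun k _ => abs_nonneg (v k)) (mem_univ i)))
    | succ k ih =>
      intro s
      have hpow : 0 < (1 + α) ^ k := pow_pos (by linarith) k
      filter_upwards [ae_mul_abs_deviation_le_of_succ hX hF hA hYZ hv hα hfComp
        ((ih (s + 1)).mono fun ω h => (le_div_iff₀' hpow).mpr h)] with ω h
      rw [pow_succ, mul_assoc]
      exact (le_div_iff₀' hpow).mp h
  filter_upwards [ae_all_iff.mpr fun k => hbound k t] with ω hω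
  exact sub_eq_zero.mp (eq_zero_of_forall_pow_mul_abs_le (by linarith) hω)

lemma ae_dotR_Mdiff_eq_zero_of_bellman (hY : ∀ t, Y t =ᵐ[P] fun ω => dotR v (X t ω)) (t : ℕ) :
    ∀ᵐ ω ∂P, dotR (Z t ω - v) (Mdiff P F X t ω) = 0 := by
  refine ae_of_forall_ae_restrict_pathAtom hX t fun ω₀ hpos => ?_
  obtain ⟨j, hj⟩ := hX t ω₀
  obtain ⟨z, hz⟩ := hF.exists_ae_restrict_pathAtom_eq_const (hYZ.2.1 t) ω₀
  have hmem := ae_restrict_mem (μ := P) (hF.measurableSet_pathAtom t ω₀)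
  have hresidual : ∀ᵐ ω ∂P.restrict (pathAtom X t ω₀), ∀ i, X (t + 1) ω = e N i →
      jump A j i (Z t ω - v) = ftil (e N j) (Z t ω) - ftil (e N j) v := by
    filter_upwards [ae_restrict_pathAtom_deviation_succ hF hA hYZ hj (hv j ⟨t, ω₀, hj, hpos⟩),
      ae_restrict_of_ae (hY t), ae_restrict_of_ae (hY (t + 1)), hmem] with ω hdev hYt hYt₁ hω i hi
    have := hdev i hi
    rw [hYt, hYt₁, hi, (hω t le_rfl).trans hj, dotR_e, dotR_e, sub_self, sub_self,
      mul_zero, zero_add] at this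
    linarith
  have hjump : ∀ i, 0 < A i j → jump A j i (z - v) = ftil (e N j) z - ftil (e N j) v := by
    intro i hi
    obtain ⟨ω, -, hXi, hres, hzω⟩ :=
      hA.exists_mem_pathAtom_of_ae_restrict hX hF hpos.ne' hj hi.ne' (hresidual.and hz)
    rw [← hzω]
    exact hres i hXi
  have hdrift := eq_zero_of_forall_jump_eq A (fun i => (hA.1 0).1 i j) ((hA.1 0).2 j) hjump
  filter_upwards [ae_restrict_of_ae (hA.ae_Mdiff_eq t), hz,
    hA.ae_restrict_pathAtom_ne_zero hX hF hj, hmem] with ω hM hzω hnext hω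
  obtain ⟨i, hi⟩ := hX (t + 1) ω
  rw [hM, hzω, hi, (hω t le_rfl).trans hj, dotR_e_sub_mulVec_e,
    hjump i (((hA.1 0).1 i j).lt_of_ne' (hnext i hi)), hdrift]

end BSDE

theorem markovian_discounted_solution_stationary_general
    {Ω : Type*} {mΩ : MeasurableSpace Ω} {N : ℕ}
    (P : Measure Ω) [IsProbabilityMeasure P] (F : Filtration ℕ mΩ)
    (X : ℕ → Ω → (Fin N → ℝ)) (hX : BasisValued X)
    (hF : IsCompletedNaturalFiltration P X F)
    (A : Matrix (Fin N) (Fin N) ℝ) (hA : IsMarkovChain P F X fun _ => A)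
    (α : ℝ) (hα : 0 < α)
    (ftil : (Fin N → ℝ) → (Fin N → ℝ) → ℝ)
    (hfComp : ComparisonCondition P F X fun ω t _ z => ftil (X t ω) z)
    (Y : ℕ → Ω → ℝ) (Z : ℕ → Ω → Fin N → ℝ)
    (hYZ : SolvesDiscountedBSDE P F X α (fun ω t z => ftil (X t ω) z) Y Z)
    (hYbdd : ∃ D : ℝ, ∀ t : ℕ, ∀ᵐ ω ∂P, |Y t ω| ≤ D) :
    ∃ v : Fin N → ℝ,
      (∀ t : ℕ, Y t =ᵐ[P] fun ω => dotR v (X t ω)) ∧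
      ∀ t : ℕ, equivMt P F X t (Z t) fun _ => v := by
  obtain ⟨v, hv⟩ := exists_bellman_solution A hα (reachableStates P X) (fun j => ftil (e N j))
    fun _ ⟨_, _, hj, hpos⟩ => jumpDominated_of_comparisonCondition hX hF hA hfComp hpos hj
  have hY := ae_eq_dotR_of_bellman hX hF hA hYZ hv hα hfComp hYbdd
  exact ⟨v, hY, fun t =>
    equivMt_of_ae_dotR_Mdiff_eq_zero (ae_dotR_Mdiff_eq_zero_of_bellman hX hF hA hYZ hv hY t)⟩

/-- **Stationarity of the Markovian solution** of the discounted BSDE when the chain is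
time-homogeneous and the driver does not depend on `t`. -/
theorem markovian_discounted_solution_stationary
    {Ω : Type*} {mΩ : MeasurableSpace Ω} {N : ℕ}
    (P : Measure Ω) [IsProbabilityMeasure P] (F : Filtration ℕ mΩ)
    (X : ℕ → Ω → (Fin N → ℝ)) (hX : BasisValued X)
    (hF : IsCompletedNaturalFiltration P X F)
    (A : Matrix (Fin N) (Fin N) ℝ) (hA : IsMarkovChain P F X fun _ => A)
    (α : ℝ) (hα : 0 < α)
    (ftil : (Fin N → ℝ) → (Fin N → ℝ) → ℝ)
    (L : ℝ) (hL : 0 < L)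
    (hfLip : DriverLipschitzNoY P F X L fun ω t z => ftil (X t ω) z)
    (hfComp : ComparisonCondition P F X fun ω t _ z => ftil (X t ω) z)
    (C : ℝ) (hC : 0 < C) (hfBdd : ∀ (t : ℕ) (ω : Ω), |ftil (X t ω) 0| ≤ C)
    (Y : ℕ → Ω → ℝ) (Z : ℕ → Ω → Fin N → ℝ)
    (hYZ : SolvesDiscountedBSDE P F X α (fun ω t z => ftil (X t ω) z) Y Z)
    (hYbdd : ∃ D : ℝ, ∀ t : ℕ, ∀ᵐ ω ∂P, |Y t ω| ≤ D) :
    ∃ v : Fin N → ℝ,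
      (∀ t : ℕ, Y t =ᵐ[P] fun ω => dotR v (X t ω)) ∧
      ∀ t : ℕ, equivMt P F X t (Z t) fun _ => v :=
  markovian_discounted_solution_stationary_general P F X hX hF A hA α hα ftil hfComp Y Z hYZ hYbdd

end DiscreteEBSDE
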